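/- arXiv:cs/0607024 — 8 statements merged into one kernel-verified Lean document; each statement's English description precedes it below -/
import Mathlib

section
/- Let H be a parity-check matrix of a binary linear code whose dual code has minimum distance d^⊥. Then every subset S of {1,...,n} with |S| ≥ n - d^⊥ + 2 is a stopping set for H; equivalently S_i = C(n,i) for n-d^⊥+2 ≤ i ≤ n. -/
open Finset

variable {ι : Type*}

/-- Support of a binary word. -/
def supp [Fintype ι] (x : ι → ZMod 2) : Finset ι :=
  Finset.univ.filter (fun j => x j ≠ 0)

/-- Hamming weight of a binary word. -/
def wt [Fintype ι] (x : ι → ZMod 2) : ℕ := (supp x).card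

/-- `S` is a stopping set for the matrix `H` if no row of the column-submatrix `H_S`
has weight exactly one. -/
def IsStoppingSet {ρ : Type*} (H : Matrix ρ ι (ZMod 2)) (S : Finset ι) : Prop :=
  ∀ i : ρ, (S.filter (fun j => H i j = 1)).card ≠ 1

/-- The dual code of a binary linear code. -/
def dualCode [Fintype ι] (C : Submodule (ZMod 2) (ι → ZMod 2)) :
    Submodule (ZMod 2) (ι → ZMod 2) where
  carrier := {y | ∀ x ∈ C, ∑ j, y j * x j = 0}
  add_mem' := by
    intro a b ha hb x hx
    simp only [Set.mem_setOf_eq] at *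
    simp [Pi.add_apply, add_mul, Finset.sum_add_distrib, ha x hx, hb x hx]
  zero_mem' := by intro x hx; simp
  smul_mem' := by
    intro c a ha x hx
    simp only [Set.mem_setOf_eq] at *
    simp [Pi.smul_apply, smul_eq_mul, mul_assoc, ← Finset.mul_sum, ha x hx]

/-- The complete parity-check matrix of `C`: rows indexed by all dual codewords. -/
def Hstar [Fintype ι] (C : Submodule (ZMod 2) (ι → ZMod 2)) :
    Matrix (dualCode C) ι (ZMod 2) := fun y j => (y : ι → ZMod 2) j

/-- A code is minimum stopping if every stopping set of its complete parity-check
matrix is the support of a codeword. -/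
def MinStopping [Fintype ι] (C : Submodule (ZMod 2) (ι → ZMod 2)) : Prop :=
  ∀ S : Finset ι, IsStoppingSet (Hstar C) S → ∃ c ∈ C, supp c = S

/-- `H` is a parity-check matrix for `C` : the words checked by all rows of `H`
are exactly the codewords of `C`. -/
def IsPCM {ρ : Type*} [Fintype ι] (C : Submodule (ZMod 2) (ι → ZMod 2))
    (H : Matrix ρ ι (ZMod 2)) : Prop :=
  ∀ x : ι → ZMod 2, x ∈ C ↔ ∀ i : ρ, ∑ j, H i j * x j = 0

/-- If the dual code has minimum distance dperp, then every subset S with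
|S| ≥ n - dperp + 2 is a stopping set for any parity-check matrix H of C. -/
theorem stmt_5 {n dperp : ℕ} {ρ : Type*} (C : Submodule (ZMod 2) (Fin n → ZMod 2))
    (H : Matrix ρ (Fin n) (ZMod 2)) (hH : IsPCM C H)
    (hdp : ∀ y ∈ dualCode C, y ≠ 0 → dperp ≤ wt y)
    (hdpex : ∃ y ∈ dualCode C, y ≠ 0 ∧ wt y = dperp) :
    ∀ S : Finset (Fin n), n - dperp + 2 ≤ S.card → IsStoppingSet H S := by

  intro S hS i hcard
  set y : Fin n → ZMod 2 := H i with hy_def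
  have hzmod : ∀ a : ZMod 2, a ≠ 0 ↔ a = 1 := by decide
  have hy : y ∈ dualCode C := by
    intro x hx
    exact (hH x).mp hx i
  obtain ⟨j, hj⟩ := Finset.card_eq_one.mp hcard
  have hjmem : j ∈ S.filter (fun k => y k = 1) := by rw [hj]; exact Finset.mem_singleton_self j
  have hyj : y j = 1 := (Finset.mem_filter.mp hjmem).2
  have hy0 : y ≠ 0 := by
    intro h
    rw [h] at hyj
    simp at hyj
  have h1 : dperp ≤ wt y := hdp y hy hy0
  have hsplit : supp y ∩ S = S.filter (fun k => y k = 1) := by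
    ext k
    simp [supp, Finset.mem_filter, hzmod (y k), and_comm]
  have hcard1 : (supp y ∩ S).card = 1 := by rw [hsplit, hj]; simp
  have hdiff : (supp y \ S).card ≤ n - S.card := by
    have h1 : supp y \ S ⊆ Sᶜ := by
      intro k hk
      simp only [Finset.mem_sdiff] at hk
      simp [hk.2]
    calc (supp y \ S).card ≤ Sᶜ.card := Finset.card_le_card h1
      _ = n - S.card := by rw [Finset.card_compl]; simp
  have hwt : wt y ≤ 1 + (n - S.card) := by
    have := Finset.card_inter_add_card_sdiff (supp y) S
    unfold wt
    omega
  have hSn : S.card ≤ n := by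
    have := Finset.card_le_univ S
    simpa using this
  have hdpn : dperp ≤ n := by
    obtain ⟨z, _, _, hz⟩ := hdpex
    have : wt z ≤ n := by
      have := Finset.card_le_univ (supp z)
      simpa [wt] using this
    omega
  omega
end

section
/- For any parity-check matrix H of a binary linear code of minimum distance d ≤ 3, the stopping distance s of H equals d. -/
open Finset

variable {ι : Type*}

/-!
Over `ZMod 2`, a row `h` checks a word `x` exactly when an even number of the positions in
`supp x` carry a one in `h`. Hence the support of every codeword is a stopping set, which gives
`s ≤ d`. Conversely, if `|S| ≤ 2` then "not exactly one" means "even" for every row of `H_S`,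
so the indicator of a nonempty stopping set `S` of size at most `2` is a nonzero codeword and
`d ≤ |S|`; stopping sets of size at least `3` cannot beat `d ≤ 3`.
-/

section

variable {ρ : Type*} [Fintype ι]

lemma supp_indicator_eq [DecidableEq ι] (S : Finset ι) :
    supp (fun j => if j ∈ S then (1 : ZMod 2) else 0) = S := by
  ext j
  by_cases hj : j ∈ S <;> simp [supp, hj]

lemma wt_pos_of_ne_zero {x : ι → ZMod 2} (hx : x ≠ 0) : 0 < wt x := by
  obtain ⟨j, hj⟩ := Function.ne_iff.mp hx
  exact Finset.card_pos.mpr ⟨j, by simpa [supp] using hj⟩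

lemma dotProduct_eq_card_filter_supp (h x : ι → ZMod 2) :
    ∑ j, h j * x j = (#{j ∈ supp x | h j = 1} : ZMod 2) := by
  rw [supp, Finset.filter_filter, Finset.card_filter]
  push_cast
  refine Finset.sum_congr rfl fun j _ => ?_
  have cases : ∀ a : ZMod 2, a = 0 ∨ a = 1 := by decide
  rcases cases (x j) with hxj | hxj <;> rcases cases (h j) with hj | hj <;> simp [hxj, hj]

lemma IsPCM.mem_iff_forall_card_filter_supp {C : Submodule (ZMod 2) (ι → ZMod 2)}
    {H : Matrix ρ ι (ZMod 2)} (hH : IsPCM C H) (x : ι → ZMod 2) :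
    x ∈ C ↔ ∀ i, (#{j ∈ supp x | H i j = 1} : ZMod 2) = 0 := by
  simp only [hH x, dotProduct_eq_card_filter_supp (H _)]

lemma IsPCM.isStoppingSet_supp {C : Submodule (ZMod 2) (ι → ZMod 2)}
    {H : Matrix ρ ι (ZMod 2)} (hH : IsPCM C H) {c : ι → ZMod 2} (hc : c ∈ C) :
    IsStoppingSet H (supp c) := by
  intro i hone
  simpa [hone] using (hH.mem_iff_forall_card_filter_supp c).mp hc i

lemma IsPCM.exists_mem_supp_eq_of_isStoppingSet [DecidableEq ι]
    {C : Submodule (ZMod 2) (ι → ZMod 2)} {H : Matrix ρ ι (ZMod 2)} (hH : IsPCM C H)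
    {S : Finset ι} (hS : IsStoppingSet H S) (hcard : #S ≤ 2) : ∃ c ∈ C, supp c = S := by
  refine ⟨_, ?_, supp_indicator_eq S⟩
  rw [hH.mem_iff_forall_card_filter_supp, supp_indicator_eq]
  intro i
  have hle : #{j ∈ S | H i j = 1} ≤ 2 := (card_filter_le _ _).trans hcard
  have hne : #{j ∈ S | H i j = 1} ≠ 1 := hS i
  interval_cases #{j ∈ S | H i j = 1} <;> first | rfl | contradiction

end

/-- For any parity-check matrix H of a binary linear code of minimum distance d ≤ 3,
the stopping distance of H equals d. -/
theorem stmt_6 {n d : ℕ} {ρ : Type*} (C : Submodule (ZMod 2) (Fin n → ZMod 2))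
    (hd : ∀ c ∈ C, c ≠ 0 → d ≤ wt c)
    (hex : ∃ c ∈ C, c ≠ 0 ∧ wt c = d)
    (hd3 : d ≤ 3)
    (H : Matrix ρ (Fin n) (ZMod 2)) (hH : IsPCM C H) :
    sInf {i : ℕ | 0 < i ∧ ∃ S : Finset (Fin n), S.card = i ∧ IsStoppingSet H S} = d := by
  refine IsLeast.csInf_eq ⟨?_, ?_⟩
  · obtain ⟨c, hcC, hc0, rfl⟩ := hex
    exact ⟨wt_pos_of_ne_zero hc0, supp c, rfl, hH.isStoppingSet_supp hcC⟩
  · rintro m ⟨hm, S, rfl, hS⟩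
    by_contra! hlt
    obtain ⟨c, hcC, rfl⟩ := hH.exists_mem_supp_eq_of_isStoppingSet hS (by omega)
    have hc0 : c ≠ 0 := by
      rintro rfl
      simp [supp] at hm
    exact hlt.not_ge (hd c hcC hc0)
end

section
/- For any binary linear [n,k,d] code C with d ≥ 4, there exists a parity-check matrix H of C whose stopping distance is 3, i.e., which admits a stopping set of size 3 that is not the support of a nonzero codeword. -/
open Finset

variable {ι : Type*}

/-! Fix three coordinates `S`. Since `d ≥ 4`, no nonzero codeword is supported in `S`, so by
duality the restriction of `C^⊥` to `S` is onto, and some dual codeword `w` equals `1` on all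
of `S`. Take as rows all dual codewords, but replace each `y` meeting `S` in exactly one position
by `y + w`, which meets `S` in two. The rows still span `C^⊥` (`w` is itself a row), and now `S`
is a stopping set. Conversely no parity-check matrix of `C` has a stopping set of size `1` or
`2`: its indicator would be a codeword of weight at most `2`. -/

section DualCode

variable [Fintype ι]

theorem dotProductBilin_nondegenerate {R : Type*} [CommSemiring R] :
    (dotProductBilin R R : LinearMap.BilinForm R (ι → R)).Nondegenerate := by
  classical
  refine ⟨fun x hx => funext fun i => ?_, fun y hy => funext fun i => ?_⟩
  · simpa using hx (Pi.single i 1)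
  · simpa using hy (Pi.single i 1)

theorem dotProductBilin_isRefl {R : Type*} [CommSemiring R] :
    LinearMap.BilinForm.IsRefl (dotProductBilin R R : LinearMap.BilinForm R (ι → R)) :=
  fun _ _ h => by simpa [dotProduct_comm] using h

theorem dualCode_eq_orthogonal (C : Submodule (ZMod 2) (ι → ZMod 2)) :
    dualCode C = LinearMap.BilinForm.orthogonal (dotProductBilin (ZMod 2) (ZMod 2)) C := by
  ext y
  simp only [LinearMap.BilinForm.mem_orthogonal_iff, dotProductBilin_apply_apply,
    dotProduct_comm _ y]
  rfl

theorem dualCode_dualCode (C : Submodule (ZMod 2) (ι → ZMod 2)) :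
    dualCode (dualCode C) = C := by
  simp only [dualCode_eq_orthogonal]
  exact LinearMap.BilinForm.orthogonal_orthogonal dotProductBilin_nondegenerate
    dotProductBilin_isRefl C

theorem exists_mem_dualCode_eqOn {C : Submodule (ZMod 2) (ι → ZMod 2)} {S : Finset ι}
    (hS : ∀ x ∈ C, supp x ⊆ S → x = 0) (t : ι → ZMod 2) :
    ∃ y ∈ dualCode C, Set.EqOn y t S := by
  classical
  set B : LinearMap.BilinForm (ZMod 2) (S → ZMod 2) := dotProductBilin (ZMod 2) (ZMod 2)
  set P := (dualCode C).map (LinearMap.funLeft (ZMod 2) (ZMod 2) ((↑) : S → ι))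
  have hP : B.orthogonal P = ⊥ := by
    refine eq_bot_iff.2 fun u hu => ?_
    set x : ι → ZMod 2 := fun j => if h : j ∈ S then u ⟨j, h⟩ else 0
    have hxS : supp x ⊆ S := fun j hj => by
      by_contra h
      simp [supp, x, h] at hj
    have hxC : x ∈ C := by
      rw [← dualCode_dualCode C]
      intro y hy
      calc ∑ j, x j * y j = ∑ j ∈ S, x j * y j :=
            (Finset.sum_subset (subset_univ S) fun j _ hj => by simp [x, hj]).symm
        _ = ∑ j : S, y j * u j := by rw [← Finset.sum_coe_sort]; simp [x, mul_comm]
        _ = 0 := hu _ ⟨y, hy, rfl⟩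
    funext j
    simpa [x] using congrFun (hS x hxC hxS) j
  have hPtop : P = ⊤ := by
    rw [← LinearMap.BilinForm.orthogonal_orthogonal dotProductBilin_nondegenerate
      dotProductBilin_isRefl P, hP, LinearMap.BilinForm.orthogonal_bot]
  obtain ⟨y, hy, hyt⟩ : (fun j : S => t j) ∈ P := hPtop ▸ Submodule.mem_top
  exact ⟨y, hy, fun j hj => congrFun hyt ⟨j, hj⟩⟩

end DualCode

theorem sum_eq_card_filter_eq_one (S : Finset ι) (f : ι → ZMod 2) :
    ∑ j ∈ S, f j = (S.filter (f · = 1)).card := by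
  rw [← Finset.sum_boole]
  refine Finset.sum_congr rfl fun j _ => ?_
  generalize f j = a
  revert a
  decide

theorem IsStoppingSet.submatrix {ρ ρ' : Type*} {H : Matrix ρ ι (ZMod 2)} {S : Finset ι}
    (hS : IsStoppingSet H S) (f : ρ' → ρ) : IsStoppingSet (H.submatrix f id) S :=
  fun i => hS (f i)

section StoppingSet

variable [Fintype ι] {ρ : Type*} {C : Submodule (ZMod 2) (ι → ZMod 2)}

theorem supp_indicator_one (S : Finset ι) :
    supp ((S : Set ι).indicator (1 : ι → ZMod 2)) = S := by
  ext j
  by_cases hj : j ∈ S <;> simp [supp, hj]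

theorem IsStoppingSet.indicator_mem {H : Matrix ρ ι (ZMod 2)} {S : Finset ι} (hH : IsPCM C H)
    (hS : IsStoppingSet H S) (hcard : S.card ≤ 2) : (S : Set ι).indicator 1 ∈ C := by
  refine (hH _).2 fun i => ?_
  have hrow : (S.filter (H i · = 1)).card ≤ 2 := (card_filter_le S _).trans hcard
  calc ∑ j, H i j * (S : Set ι).indicator 1 j = ∑ j ∈ S, H i j := by
        classical
        simp only [Set.indicator_apply, Finset.mem_coe, Pi.one_apply, mul_ite, mul_one, mul_zero]
        rw [Finset.sum_ite_mem, univ_inter]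
    _ = (S.filter (H i · = 1)).card := sum_eq_card_filter_eq_one S (H i)
    _ = 0 := by
        have := hS i
        interval_cases (S.filter (H i · = 1)).card <;> first | rfl | contradiction

theorem IsStoppingSet.three_le_card {H : Matrix ρ ι (ZMod 2)} {S : Finset ι} (hH : IsPCM C H)
    (hC : ∀ c ∈ C, c ≠ 0 → 3 ≤ wt c) (hS : IsStoppingSet H S) (hne : S.Nonempty) :
    3 ≤ S.card := by
  by_contra! hlt
  have hne0 : (S : Set ι).indicator (1 : ι → ZMod 2) ≠ 0 := fun h => by
    obtain ⟨j, hj⟩ := hne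
    simpa [hj] using congrFun h j
  have := hC _ (hS.indicator_mem hH (by omega)) hne0
  rw [wt, supp_indicator_one] at this
  omega

theorem IsPCM.submatrix {H : Matrix ρ ι (ZMod 2)} (hH : IsPCM C H) {ρ' : Type*} {f : ρ' → ρ}
    (hf : Function.Surjective f) : IsPCM C (H.submatrix f id) := fun x =>
  (hH x).trans ⟨fun h i => h (f i), fun h i => by obtain ⟨i', rfl⟩ := hf i; exact h i'⟩

end StoppingSet

section AdjustedCheckMatrix

variable [Fintype ι] {C : Submodule (ZMod 2) (ι → ZMod 2)} {S : Finset ι} {w : ι → ZMod 2}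

def adjustedCheckMatrix (C : Submodule (ZMod 2) (ι → ZMod 2)) (S : Finset ι)
    (w : ι → ZMod 2) : Matrix (dualCode C) ι (ZMod 2) :=
  fun y => if (S.filter ((y : ι → ZMod 2) · = 1)).card = 1 then y + w else y

theorem adjustedCheckMatrix_mem_dualCode (hw : w ∈ dualCode C) (y : dualCode C) :
    adjustedCheckMatrix C S w y ∈ dualCode C := by
  unfold adjustedCheckMatrix
  split_ifs
  exacts [add_mem y.2 hw, y.2]

theorem isPCM_adjustedCheckMatrix (hw : w ∈ dualCode C)
    (hwS : (S.filter (w · = 1)).card ≠ 1) : IsPCM C (adjustedCheckMatrix C S w) := by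
  refine fun x => ⟨fun hx y => adjustedCheckMatrix_mem_dualCode hw y x hx, fun h => ?_⟩
  have hwx : ∑ j, w j * x j = 0 := by simpa [adjustedCheckMatrix, hwS] using h ⟨w, hw⟩
  rw [← dualCode_dualCode C]
  intro y hy
  have hy' := h ⟨y, hy⟩
  simp only [adjustedCheckMatrix] at hy'
  split_ifs at hy'
  · simp only [Pi.add_apply, add_mul, sum_add_distrib, hwx, add_zero] at hy'
    simpa [mul_comm] using hy'
  · simpa [mul_comm] using hy'

theorem isStoppingSet_adjustedCheckMatrix (hwS : ∀ j ∈ S, w j = 1) (hS : S.card ≠ 2) :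
    IsStoppingSet (adjustedCheckMatrix C S w) S := by
  intro y
  unfold adjustedCheckMatrix
  split_ifs with hy
  · have hflip : S.filter (fun j => ((y : ι → ZMod 2) + w) j = 1)
        = S.filter (fun j => ¬ (y : ι → ZMod 2) j = 1) := filter_congr fun j hj => by
      rw [Pi.add_apply, hwS j hj]
      exact (by decide : ∀ a : ZMod 2, a + 1 = 1 ↔ ¬ a = 1) _
    have := card_filter_add_card_filter_not (s := S) (fun j => (y : ι → ZMod 2) j = 1)
    rw [hflip]
    omega
  · exact hy

end AdjustedCheckMatrix

theorem stmt_7_general {n d : ℕ} (C : Submodule (ZMod 2) (Fin n → ZMod 2))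
    (hd : ∀ c ∈ C, c ≠ 0 → d ≤ wt c)
    (hex : ∃ c ∈ C, c ≠ 0 ∧ wt c = d)
    (hd4 : 4 ≤ d) :
    ∃ (r : ℕ) (H : Matrix (Fin r) (Fin n) (ZMod 2)), IsPCM C H ∧
      sInf {i : ℕ | 0 < i ∧ ∃ S : Finset (Fin n), S.card = i ∧ IsStoppingSet H S} = 3 := by
  obtain ⟨c, -, -, hc⟩ := hex
  have hn : 3 ≤ (univ : Finset (Fin n)).card := by
    have : wt c ≤ n := (card_le_univ (supp c)).trans_eq (Fintype.card_fin n)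
    rw [card_univ, Fintype.card_fin]
    omega
  obtain ⟨S, -, hS3⟩ := exists_subset_card_eq hn
  have hCS : ∀ x ∈ C, supp x ⊆ S → x = 0 := fun x hx hxS => by
    by_contra hx0
    have : wt x ≤ 3 := hS3 ▸ card_le_card hxS
    have := hd x hx hx0
    omega
  obtain ⟨w, hw, hwS⟩ : ∃ w ∈ dualCode C, ∀ j ∈ S, w j = 1 :=
    exists_mem_dualCode_eqOn hCS 1
  obtain ⟨r, ⟨e⟩⟩ := Finite.exists_equiv_fin (dualCode C)
  set H := (adjustedCheckMatrix C S w).submatrix e.symm id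
  have hH : IsPCM C H := (isPCM_adjustedCheckMatrix hw
    (by rw [filter_true_of_mem hwS, hS3]; decide)).submatrix e.symm.surjective
  have hS : IsStoppingSet H S := (isStoppingSet_adjustedCheckMatrix hwS (by omega)).submatrix _
  have h3 : 3 ∈ {i : ℕ | 0 < i ∧ ∃ S : Finset (Fin n), S.card = i ∧ IsStoppingSet H S} :=
    ⟨by norm_num, S, hS3, hS⟩
  refine ⟨r, H, hH, le_antisymm (Nat.sInf_le h3) (le_csInf ⟨3, h3⟩ ?_)⟩
  rintro _ ⟨hm, T, rfl, hT⟩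
  exact hT.three_le_card hH (fun x hx hx0 => by have := hd x hx hx0; omega) (card_pos.1 hm)

/-- For any binary linear [n,k,d] code C with d ≥ 4, there exists a parity-check matrix H
of C whose stopping distance is 3. -/
theorem stmt_7 {n k d : ℕ} (C : Submodule (ZMod 2) (Fin n → ZMod 2))
    (hk : Module.finrank (ZMod 2) C = k)
    (hd : ∀ c ∈ C, c ≠ 0 → d ≤ wt c)
    (hex : ∃ c ∈ C, c ≠ 0 ∧ wt c = d)
    (hd4 : 4 ≤ d) :
    ∃ (r : ℕ) (H : Matrix (Fin r) (Fin n) (ZMod 2)), IsPCM C H ∧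
      sInf {i : ℕ | 0 < i ∧ ∃ S : Finset (Fin n), S.card = i ∧ IsStoppingSet H S} = 3 :=
  stmt_7_general C hd hex hd4
end

section
/- For the complete parity-check matrix H* of a binary linear code C (whose rows are all 2^(n-k) codewords of the dual code), and for every parity-check matrix H of C: S_i ≥ S*_i ≥ A_i for all i, where S_i, S*_i count stopping sets of size i for H and H*, and A_i counts codewords of weight i. Consequently s ≤ s* ≤ d for the corresponding stopping distances. -/
open Finset

variable {ι : Type*}

lemma zmod2_mul (a b : ZMod 2) : a * b = (if a = 1 && b ≠ 0 then (1:ZMod 2) else 0) := by revert a b; decide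

lemma supp_inj [Fintype ι] {c c' : ι → ZMod 2} (h : supp c = supp c') : c = c' := by
  funext j
  have := Finset.ext_iff.mp h j
  simp [supp] at this
  have h2 : ∀ a b : ZMod 2, (a ≠ 0 ↔ b ≠ 0) → a = b := by decide
  exact h2 _ _ this

lemma supp_stopping [Fintype ι] (C : Submodule (ZMod 2) (ι → ZMod 2))
    {c : ι → ZMod 2} (hc : c ∈ C) : IsStoppingSet (Hstar C) (supp c) := by
  intro y hcard
  have hsum : ∑ j, (y : ι → ZMod 2) j * c j = 0 := y.2 c hc
  have : ∑ j, (y : ι → ZMod 2) j * c j =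
      ((Finset.univ.filter (fun j => (y : ι → ZMod 2) j = 1 ∧ c j ≠ 0)).card : ZMod 2) := by
    rw [Finset.card_filter]
    push_cast
    exact Finset.sum_congr rfl (fun j _ => by rw [zmod2_mul]; by_cases h : ((y:ι→ZMod 2) j = 1 ∧ c j ≠ 0) <;> simp [h])
  have hT : (supp c).filter (fun j => Hstar C y j = 1) =
      Finset.univ.filter (fun j => (y : ι → ZMod 2) j = 1 ∧ c j ≠ 0) := by
    ext j; simp [supp, Hstar, Finset.filter_filter, and_comm]
  rw [hT] at hcard
  rw [this, hcard] at hsum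
  simp at hsum

lemma stopping_mono {ρ : Type*} [Fintype ι] (C : Submodule (ZMod 2) (ι → ZMod 2))
    (H : Matrix ρ ι (ZMod 2)) (hH : IsPCM C H) {S : Finset ι}
    (hS : IsStoppingSet (Hstar C) S) : IsStoppingSet H S := by
  intro i
  have hrow : (fun j => H i j) ∈ dualCode C := fun x hx => (hH x).mp hx i
  exact hS ⟨_, hrow⟩

/-- For the complete parity-check matrix H* and any parity-check matrix H of C:
S_i ≥ S*_i ≥ A_i for all i, and consequently s ≤ s* ≤ d. -/
theorem stmt_9 {n k d : ℕ} {ρ : Type*} (C : Submodule (ZMod 2) (Fin n → ZMod 2))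
    (hk : Module.finrank (ZMod 2) C = k)
    (hd : ∀ c ∈ C, c ≠ 0 → d ≤ wt c)
    (hex : ∃ c ∈ C, c ≠ 0 ∧ wt c = d)
    (H : Matrix ρ (Fin n) (ZMod 2)) (hH : IsPCM C H) :
    (∀ i : ℕ,
      Set.ncard {c : Fin n → ZMod 2 | c ∈ C ∧ wt c = i}
        ≤ Set.ncard {S : Finset (Fin n) | S.card = i ∧ IsStoppingSet (Hstar C) S} ∧
      Set.ncard {S : Finset (Fin n) | S.card = i ∧ IsStoppingSet (Hstar C) S}
        ≤ Set.ncard {S : Finset (Fin n) | S.card = i ∧ IsStoppingSet H S}) ∧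
    sInf {i : ℕ | 0 < i ∧ ∃ S : Finset (Fin n), S.card = i ∧ IsStoppingSet H S}
      ≤ sInf {i : ℕ | 0 < i ∧ ∃ S : Finset (Fin n), S.card = i ∧ IsStoppingSet (Hstar C) S} ∧
    sInf {i : ℕ | 0 < i ∧ ∃ S : Finset (Fin n), S.card = i ∧ IsStoppingSet (Hstar C) S} ≤ d := by
  obtain ⟨c₀, hc₀C, hc₀ne, hc₀wt⟩ := hex
  have hd0 : 0 < d := by
    rw [← hc₀wt]
    rcases Function.ne_iff.mp hc₀ne with ⟨j, hj⟩
    exact Finset.card_pos.mpr ⟨j, by simpa [supp] using hj⟩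
  have hA : {i : ℕ | 0 < i ∧ ∃ S : Finset (Fin n), S.card = i ∧ IsStoppingSet (Hstar C) S} ⊆
      {i : ℕ | 0 < i ∧ ∃ S : Finset (Fin n), S.card = i ∧ IsStoppingSet H S} := by
    rintro i ⟨hi, S, hSc, hS⟩
    exact ⟨hi, S, hSc, stopping_mono C H hH hS⟩
  have hdmem : d ∈ {i : ℕ | 0 < i ∧ ∃ S : Finset (Fin n), S.card = i ∧ IsStoppingSet (Hstar C) S} :=
    ⟨hd0, supp c₀, hc₀wt, supp_stopping C hc₀C⟩
  refine ⟨fun i => ⟨?_, ?_⟩, ?_, Nat.sInf_le hdmem⟩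
  · apply Set.ncard_le_ncard_of_injOn (fun c => supp c)
    · rintro c ⟨hcC, hcw⟩
      exact ⟨hcw, supp_stopping C hcC⟩
    · intro a _ b _ hab
      exact supp_inj hab
  · apply Set.ncard_le_ncard
    · rintro S ⟨hSc, hS⟩
      exact ⟨hSc, stopping_mono C H hH hS⟩
    · exact Set.toFinite _
  · exact Nat.sInf_le (hA (Nat.sInf_mem ⟨d, hdmem⟩))
end

section
/- Let C be a binary linear [n,k] code and let H be the matrix whose rows are all nonzero dual codewords of weight at most k+1. Then every stopping set for H that does not contain the support of a nonzero codeword of C is empty; equivalently, the dead-end set enumerator of H equals the incorrigible set enumerator of C. -/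
open Finset

variable {ι : Type*}

private lemma key_exists {n k : ℕ} (C : Submodule (ZMod 2) (Fin n → ZMod 2))
    (hk : Module.finrank (ZMod 2) C = k)
    (S : Finset (Fin n)) (j : Fin n) (hj : j ∈ S)
    (hnc : ¬ ∃ c ∈ C, c ≠ 0 ∧ supp c ⊆ S) :
    ∃ y, (y ∈ dualCode C ∧ (∀ i ∈ S.erase j, y i = 0) ∧ y j = 1) ∧ wt y ≤ k + 1 := by
  classical
  have two : ∀ a : ZMod 2, a ≠ 0 → a = 1 := by decide
  set T := S.erase j with hT
  -- the subspace of vectors supported in T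
  let U : Submodule (ZMod 2) (Fin n → ZMod 2) :=
    { carrier := {v | ∀ i, i ∉ T → v i = 0}
      add_mem' := by intro a b ha hb i hi; simp [ha i hi, hb i hi]
      zero_mem' := by intro i hi; rfl
      smul_mem' := by intro c a ha i hi; simp [ha i hi] }
  have hUmem : ∀ v, v ∈ U ↔ ∀ i, i ∉ T → v i = 0 := fun v => Iff.rfl
  -- e_j is not in C ⊔ U
  have hnotin : (Pi.single j 1 : Fin n → ZMod 2) ∉ C ⊔ U := by
    intro hmem
    rw [Submodule.mem_sup] at hmem
    obtain ⟨c, hc, u, hu, hcu⟩ := hmem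
    apply hnc
    refine ⟨c, hc, ?_, ?_⟩
    · intro hc0
      have : (Pi.single j 1 : Fin n → ZMod 2) j = u j := by rw [← hcu]; simp [hc0]
      rw [Pi.single_eq_same, (hUmem u).1 hu j (Finset.notMem_erase j S)] at this
      exact one_ne_zero this
    · intro i hi
      simp only [supp, Finset.mem_filter] at hi
      by_contra hiS
      apply hi.2
      have hiT : i ∉ T := fun h => hiS (Finset.mem_of_mem_erase h)
      have hij : i ≠ j := fun h => hiS (h ▸ hj)
      have : c i + u i = (Pi.single j 1 : Fin n → ZMod 2) i := by rw [← hcu]; rfl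
      rw [(hUmem u).1 hu i hiT, add_zero, Pi.single_eq_of_ne hij] at this
      exact this
  -- get a dual functional
  have := (Subspace.forall_mem_dualAnnihilator_apply_eq_zero_iff (C ⊔ U) (Pi.single j 1)).not
  rw [iff_iff_implies_and_implies] at this
  have hex : ∃ φ : Module.Dual (ZMod 2) (Fin n → ZMod 2),
      φ ∈ (C ⊔ U).dualAnnihilator ∧ φ (Pi.single j 1) ≠ 0 := by
    by_contra hcon
    push_neg at hcon
    exact hnotin ((Subspace.forall_mem_dualAnnihilator_apply_eq_zero_iff (C ⊔ U)
      (Pi.single j 1)).1 (fun φ hφ => hcon φ hφ))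
  obtain ⟨φ, hφann, hφj⟩ := hex
  rw [Submodule.mem_dualAnnihilator] at hφann
  -- the vector y0
  set y0 : Fin n → ZMod 2 := fun i => φ (Pi.single i 1) with hy0
  have hkey : ∀ x : Fin n → ZMod 2, ∑ l, y0 l * x l = φ x := by
    intro x
    conv_rhs => rw [← Finset.univ_sum_single x]
    rw [map_sum]
    refine Finset.sum_congr rfl (fun l _ => ?_)
    have : (Pi.single l (x l) : Fin n → ZMod 2) = x l • Pi.single l 1 := by
      ext i
      by_cases h : i = l
      · subst h; simp
      · simp [Pi.single_eq_of_ne h]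
    rw [this, map_smul, smul_eq_mul, mul_comm]
  -- P defines admissible vectors
  have hP0 : y0 ∈ dualCode C ∧ (∀ i ∈ T, y0 i = 0) ∧ y0 j = 1 := by
    refine ⟨?_, ?_, ?_⟩
    · intro x hx
      rw [hkey]
      exact hφann x (Submodule.mem_sup_left hx)
    · intro i hi
      exact hφann (Pi.single i 1) (Submodule.mem_sup_right (by
        intro l hl
        exact Pi.single_eq_of_ne (by rintro rfl; exact hl hi) 1))
    · exact two _ hφj
  -- find one of minimal weight
  have hexm : ∃ m, ∃ y : Fin n → ZMod 2,
      (y ∈ dualCode C ∧ (∀ i ∈ T, y i = 0) ∧ y j = 1) ∧ wt y = m := ⟨wt y0, y0, hP0, rfl⟩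
  obtain ⟨y, hPy, hwty⟩ := Nat.find_spec hexm
  refine ⟨y, hPy, ?_⟩
  by_contra hbig
  push_neg at hbig
  obtain ⟨hyC, hyT, hyj⟩ := hPy
  have hjsupp : j ∈ supp y := by simp [supp, hyj]
  set A : Finset (Fin n) := (supp y).erase j with hA
  have hAS : ∀ i ∈ A, i ∉ S := by
    intro i hi hiS
    have hij : i ≠ j := Finset.ne_of_mem_erase hi
    have : y i = 0 := hyT i (Finset.mem_erase.2 ⟨hij, hiS⟩)
    have : i ∉ supp y := by simp [supp, this]
    exact this (Finset.mem_of_mem_erase hi)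
  have hcardA : k + 1 ≤ A.card := by
    have : A.card = wt y - 1 := by
      rw [hA, Finset.card_erase_of_mem hjsupp]; rfl
    omega
  -- the coordinate functionals on C indexed by A are dependent
  let F : A → (Module.Dual (ZMod 2) C) := fun i => (LinearMap.proj i.1).comp C.subtype
  have hnli : ¬ LinearIndependent (ZMod 2) F := by
    intro hli
    have := hli.fintype_card_le_finrank
    rw [Subspace.dual_finrank_eq, hk, Fintype.card_coe] at this
    omega
  rw [Fintype.not_linearIndependent_iff] at hnli
  obtain ⟨g, hgsum, i0, hgi0⟩ := hnli
  -- the dual vector z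
  set z : Fin n → ZMod 2 := fun l => if h : l ∈ A then g ⟨l, h⟩ else 0 with hz
  have hzsum : ∀ x ∈ C, ∑ l, z l * x l = 0 := by
    intro x hx
    have h1 : ∑ l, z l * x l = ∑ l ∈ A, z l * x l := by
      refine (Finset.sum_subset A.subset_univ (fun l _ hl => ?_)).symm
      simp [hz, dif_neg hl]
    have h2 : ∑ l ∈ A, z l * x l = ∑ i : A, g i * x i.1 := by
      rw [← Finset.sum_coe_sort]
      refine Finset.sum_congr rfl (fun i _ => ?_)
      simp [hz, dif_pos i.2]
    have h3 : ∑ i : A, g i * x i.1 = (∑ i : A, g i • F i) ⟨x, hx⟩ := by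
      rw [LinearMap.sum_apply]
      refine Finset.sum_congr rfl (fun i _ => ?_)
      simp [F]
    rw [h1, h2, h3, hgsum]; rfl
  have hzC : z ∈ dualCode C := hzsum
  -- flip y on supp z
  have hzsupp : ∀ l, z l ≠ 0 → l ∈ A := by
    intro l hl
    by_contra h
    exact hl (by simp [hz, dif_neg h])
  have hi0z : z i0.1 = 1 := by
    have : z i0.1 = g i0 := by simp [hz, dif_pos i0.2]
    rw [this]; exact two _ hgi0
  set y' := y + z with hy'
  have hPy' : y' ∈ dualCode C ∧ (∀ i ∈ T, y' i = 0) ∧ y' j = 1 := by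
    refine ⟨(dualCode C).add_mem hyC hzC, ?_, ?_⟩
    · intro i hi
      have hiS : i ∈ S := Finset.mem_of_mem_erase hi
      have : z i = 0 := by
        by_contra h
        exact hAS i (hzsupp i h) hiS
      simp [hy', Pi.add_apply, hyT i hi, this]
    · have : z j = 0 := by
        by_contra h
        exact Finset.notMem_erase j (supp y) (hzsupp j h)
      simp [hy', Pi.add_apply, hyj, this]
  have hsub : supp y' ⊆ supp y := by
    intro l hl
    simp only [supp, Finset.mem_filter, Finset.mem_univ, true_and] at hl ⊢
    intro hyl
    apply hl
    have hzl : z l = 0 := by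
      by_contra h
      have : l ∈ supp y := Finset.mem_of_mem_erase (hzsupp l h)
      simp [supp, hyl] at this
    simp [hy', Pi.add_apply, hyl, hzl]
  have hne : i0.1 ∈ supp y ∧ i0.1 ∉ supp y' := by
    constructor
    · exact Finset.mem_of_mem_erase i0.2
    · have hy1 : y i0.1 = 1 := by
        have := Finset.mem_of_mem_erase i0.2
        simp only [supp, Finset.mem_filter] at this
        exact two _ this.2
      simp only [supp, Finset.mem_filter, Finset.mem_univ, true_and, not_not,
        hy', Pi.add_apply, hy1, hi0z]
      decide
  have hlt : wt y' < wt y :=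
    Finset.card_lt_card (Finset.ssubset_iff_of_subset hsub |>.2 ⟨i0.1, hne.1, hne.2⟩)
  have hle : Nat.find hexm ≤ wt y' := Nat.find_le ⟨y', hPy', rfl⟩
  omega

/-- For the matrix H whose rows are all nonzero dual codewords of weight at most k+1,
every stopping set that does not contain the support of a nonzero codeword is empty
(hence the dead-end set enumerator of H equals the incorrigible set enumerator of C). -/
theorem stmt_11 {n k : ℕ} (C : Submodule (ZMod 2) (Fin n → ZMod 2))
    (hk : Module.finrank (ZMod 2) C = k)
    (H : Matrix {y : Fin n → ZMod 2 // y ∈ dualCode C ∧ y ≠ 0 ∧ wt y ≤ k + 1}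
        (Fin n) (ZMod 2))
    (hrows : ∀ y, H y = y.1) :
    ∀ S : Finset (Fin n), IsStoppingSet H S →
      (¬ ∃ c ∈ C, c ≠ 0 ∧ supp c ⊆ S) → S = ∅ := by
  classical
  intro S hSS hnc
  by_contra hS
  obtain ⟨j, hj⟩ := Finset.nonempty_iff_ne_empty.2 hS
  obtain ⟨y, ⟨hyC, hyT, hyj⟩, hwt⟩ := key_exists C hk S j hj hnc
  have hyne : y ≠ 0 := by
    intro h
    rw [h] at hyj
    exact one_ne_zero hyj.symm
  have hstop := hSS ⟨y, hyC, hyne, hwt⟩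
  apply hstop
  rw [hrows]
  have hfilter : S.filter (fun l => y l = 1) = {j} := by
    ext l
    simp only [Finset.mem_filter, Finset.mem_singleton]
    constructor
    · rintro ⟨hlS, hl1⟩
      by_contra hlj
      rw [hyT l (Finset.mem_erase.2 ⟨hlj, hlS⟩)] at hl1
      exact one_ne_zero hl1.symm
    · rintro rfl
      exact ⟨hj, hyj⟩
  rw [hfilter, Finset.card_singleton]
end

section
/- Any binary linear code of dimension at least 2 and minimum distance at least d has length at least d + ⌈d/2⌉ = ⌈3d/2⌉. -/
open Finset

variable {ι : Type*}

lemma wt_eq_sum [Fintype ι] (x : ι → ZMod 2) :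
    wt x = ∑ j, if x j ≠ 0 then 1 else 0 := by
  simp [wt, supp, Finset.card_filter]

lemma zmod2_cases (a : ZMod 2) : a = 0 ∨ a = 1 := by revert a; decide

lemma key_ineq {n : ℕ} (x y : Fin n → ZMod 2) :
    wt x + wt y + wt (x + y) ≤ 2 * n := by
  rw [wt_eq_sum, wt_eq_sum, wt_eq_sum, ← Finset.sum_add_distrib, ← Finset.sum_add_distrib]
  calc (∑ j, ((if x j ≠ 0 then 1 else 0) + (if y j ≠ 0 then 1 else 0) +
        (if (x + y) j ≠ 0 then 1 else 0)))
      ≤ ∑ _j : Fin n, 2 := by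
        apply Finset.sum_le_sum
        intro j _
        rcases zmod2_cases (x j) with hx | hx <;> rcases zmod2_cases (y j) with hy | hy <;>
          simp [Pi.add_apply, hx, hy] <;> decide
    _ = 2 * n := by simp [Finset.sum_const, mul_comm]

/-- Any binary linear code of dimension at least 2 and minimum distance at least d has
length at least d + ⌈d/2⌉ = ⌈3d/2⌉. -/
theorem stmt_15 {n d : ℕ} (C : Submodule (ZMod 2) (Fin n → ZMod 2))
    (hk : 2 ≤ Module.finrank (ZMod 2) C)
    (hd : ∀ c ∈ C, c ≠ 0 → d ≤ wt c) :
    d + (d + 1) / 2 ≤ n := by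
  -- get a nonzero codeword x
  have hC : Nontrivial C := by
    rw [← Module.finrank_pos_iff (R := ZMod 2)]
    omega
  obtain ⟨⟨x, hxC⟩, hx0⟩ := exists_ne (0 : C)
  have hx : x ≠ 0 := by
    intro h
    exact hx0 (by ext; simp [h])
  -- get y ∈ C not in span {x}
  have hnle : ¬ C ≤ Submodule.span (ZMod 2) {x} := by
    intro hle
    have h1 : Module.finrank (ZMod 2) C ≤
        Module.finrank (ZMod 2) (Submodule.span (ZMod 2) {x}) :=
      Submodule.finrank_mono hle
    rw [finrank_span_singleton hx] at h1
    omega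
  obtain ⟨y, hyC, hyx⟩ := SetLike.not_le_iff_exists.mp hnle
  have hy : y ≠ 0 := by
    intro h; exact hyx (h ▸ Submodule.zero_mem _)
  have hxy : x + y ≠ 0 := by
    intro h
    have : y = -x := by linear_combination (norm := abel) h
    exact hyx (this ▸ Submodule.neg_mem _ (Submodule.mem_span_singleton_self x))
  have hdx := hd x hxC hx
  have hdy := hd y hyC hy
  have hdxy := hd (x + y) (C.add_mem hxC hyC) hxy
  have := key_ineq x y
  omega
end

section
/- The direct sum code C₁ ⊕ C₂ ⊕ ... ⊕ C_t is minimum stopping if and only if each C_i is minimum stopping. -/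
open Finset

variable {ι : Type*}

/-- The direct sum (juxtaposition) of binary linear codes. -/
def dirSum {t : ℕ} {m : Fin t → ℕ}
    (C : ∀ i, Submodule (ZMod 2) (Fin (m i) → ZMod 2)) :
    Submodule (ZMod 2) ((Σ i, Fin (m i)) → ZMod 2) where
  carrier := {x | ∀ i, (fun j => x ⟨i, j⟩) ∈ C i}
  add_mem' := fun ha hb i => (C i).add_mem (ha i) (hb i)
  zero_mem' := fun i => (C i).zero_mem
  smul_mem' := fun c _ hx i => (C i).smul_mem c (hx i)

/-! The dual of a direct sum is the direct sum of the duals, so the number of positions of a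
stopping-set candidate `S` met by a dual codeword is the sum of the blockwise numbers. A sum of
naturals equals one only if some summand does, and a dual word of one block extends by zero,
hence `S` is a stopping set exactly when every block of `S` is one. A codeword with support `S` is likewise assembled from, or restricted to,
codewords supported on the blocks. -/

lemma Finset.exists_eq_one_of_sum_eq_one {κ : Type*} {s : Finset κ} {f : κ → ℕ}
    (h : ∑ i ∈ s, f i = 1) : ∃ i ∈ s, f i = 1 := by
  obtain ⟨i, hi, hne⟩ := exists_ne_zero_of_sum_ne_zero (h ▸ one_ne_zero)
  exact ⟨i, hi, le_antisymm (h ▸ single_le_sum (fun _ _ => Nat.zero_le _) hi)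
    (Nat.one_le_iff_ne_zero.2 hne)⟩

lemma isStoppingSet_empty {ρ : Type*} (H : Matrix ρ ι (ZMod 2)) : IsStoppingSet H ∅ :=
  fun _ => by simp

section Sigma

variable {κ : Type*} {α : κ → Type*}

noncomputable def sigmaFiber (i : κ) (S : Finset (Σ i, α i)) : Finset (α i) :=
  S.preimage (Sigma.mk i) sigma_mk_injective.injOn

@[simp] lemma mem_sigmaFiber {i : κ} {S : Finset (Σ i, α i)} {j : α i} :
    j ∈ sigmaFiber i S ↔ (⟨i, j⟩ : Σ i, α i) ∈ S :=
  mem_preimage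

lemma sigmaFiber_map_sigmaMk_self (i : κ) (S : Finset (α i)) :
    sigmaFiber i (S.map (Function.Embedding.sigmaMk i)) = S := by
  ext j; simp

lemma sigmaFiber_map_sigmaMk_of_ne {i j : κ} (h : j ≠ i) (S : Finset (α i)) :
    sigmaFiber j (S.map (Function.Embedding.sigmaMk i)) = ∅ := by
  ext k; simp [Ne.symm h]

lemma sigmaFiber_filter (i : κ) (S : Finset (Σ i, α i)) (p : (Σ i, α i) → Prop)
    [DecidablePred p] : sigmaFiber i (S.filter p) = (sigmaFiber i S).filter (p ⟨i, ·⟩) := by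
  ext j; simp

def sigmaSingle {M : Type*} [Zero M] [DecidableEq κ] (i : κ) (x : α i → M) :
    (Σ i, α i) → M :=
  fun p => Pi.single (M := fun i => α i → M) i x p.1 p.2

@[simp] lemma sigmaSingle_apply_self {M : Type*} [Zero M] [DecidableEq κ] (i : κ)
    (x : α i → M) (j : α i) : sigmaSingle i x ⟨i, j⟩ = x j := by
  simp [sigmaSingle]

@[simp] lemma sigmaSingle_apply_of_ne {M : Type*} [Zero M] [DecidableEq κ] {i j : κ}
    (h : j ≠ i) (x : α i → M) (k : α j) : sigmaSingle i x ⟨j, k⟩ = 0 := by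
  simp [sigmaSingle, h]

variable [Fintype κ]

lemma univ_sigma_sigmaFiber (S : Finset (Σ i, α i)) : univ.sigma (sigmaFiber · S) = S := by
  classical
  exact S.sigma_preimage_mk_of_subset (subset_univ _)

lemma card_eq_sum_card_sigmaFiber (S : Finset (Σ i, α i)) : #S = ∑ i, #(sigmaFiber i S) := by
  conv_lhs => rw [← univ_sigma_sigmaFiber S]
  exact card_sigma _ _

variable [∀ i, Fintype (α i)]

lemma supp_sigma_mk_apply (x : (Σ i, α i) → ZMod 2) (i : κ) :
    supp (x ⟨i, ·⟩) = sigmaFiber i (supp x) := by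
  ext j; simp [supp]

lemma supp_sigma_uncurry (c : ∀ i, α i → ZMod 2) :
    supp (fun p : Σ i, α i => c p.1 p.2) = univ.sigma fun i => supp (c i) := by
  ext ⟨i, j⟩; simp [supp]

end Sigma

section DirSum

variable {t : ℕ} {m : Fin t → ℕ} (C : ∀ i, Submodule (ZMod 2) (Fin (m i) → ZMod 2))

lemma sigmaSingle_mem_dirSum {i : Fin t} {x : Fin (m i) → ZMod 2} (hx : x ∈ C i) :
    sigmaSingle i x ∈ dirSum C := fun j => by
  rcases eq_or_ne j i with rfl | hj
  · simpa using hx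
  · simp [hj, ← Pi.zero_def]

lemma mem_dualCode_dirSum {y : (Σ i, Fin (m i)) → ZMod 2} :
    y ∈ dualCode (dirSum C) ↔ ∀ i, (y ⟨i, ·⟩) ∈ dualCode (C i) := by
  have hsplit (x : (Σ i, Fin (m i)) → ZMod 2) :
      ∑ p, y p * x p = ∑ i, ∑ j, y ⟨i, j⟩ * x ⟨i, j⟩ :=
    Fintype.sum_sigma _
  constructor
  · intro hy i x hx
    have := hy _ (sigmaSingle_mem_dirSum C hx)
    rw [hsplit, Fintype.sum_eq_single i fun j hj => by simp [hj]] at this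
    simpa using this
  · intro hy x hx
    rw [hsplit]
    exact sum_eq_zero fun i _ => hy i _ (hx i)

lemma isStoppingSet_Hstar_dirSum_iff (S : Finset (Σ i, Fin (m i))) :
    IsStoppingSet (Hstar (dirSum C)) S ↔ ∀ i, IsStoppingSet (Hstar (C i)) (sigmaFiber i S) := by
  have hcount (y : (Σ i, Fin (m i)) → ZMod 2) :
      #(S.filter (y · = 1)) = ∑ i, #((sigmaFiber i S).filter (y ⟨i, ·⟩ = 1)) := by
    simp only [card_eq_sum_card_sigmaFiber (S.filter _), sigmaFiber_filter]
  constructor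
  · intro hS i y hy
    have hdual : sigmaSingle i (y : Fin (m i) → ZMod 2) ∈ dualCode (dirSum C) :=
      (mem_dualCode_dirSum C).2 (sigmaSingle_mem_dirSum (fun j => dualCode (C j)) y.2)
    apply hS ⟨_, hdual⟩
    rw [hcount, Fintype.sum_eq_single i fun j hj => by simp [Hstar, hj]]
    convert hy using 3
    simp [Hstar]
  · intro hS y hy
    rw [hcount] at hy
    obtain ⟨i, -, hi⟩ := exists_eq_one_of_sum_eq_one hy
    exact hS i ⟨_, (mem_dualCode_dirSum C).1 y.2 i⟩ hi

lemma MinStopping.of_dirSum (h : MinStopping (dirSum C)) (i : Fin t) : MinStopping (C i) := by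
  intro S hS
  have hstop : IsStoppingSet (Hstar (dirSum C)) (S.map (Function.Embedding.sigmaMk i)) := by
    refine (isStoppingSet_Hstar_dirSum_iff C _).2 fun j => ?_
    rcases eq_or_ne j i with rfl | hj
    · rwa [sigmaFiber_map_sigmaMk_self]
    · rw [sigmaFiber_map_sigmaMk_of_ne hj]
      exact isStoppingSet_empty _
  obtain ⟨c, hc, hcS⟩ := h _ hstop
  exact ⟨(c ⟨i, ·⟩), hc i, by rw [supp_sigma_mk_apply c i, hcS, sigmaFiber_map_sigmaMk_self]⟩

lemma minStopping_dirSum (h : ∀ i, MinStopping (C i)) : MinStopping (dirSum C) := by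
  intro S hS
  choose c hcC hcS using fun i => h i _ ((isStoppingSet_Hstar_dirSum_iff C S).1 hS i)
  refine ⟨fun p => c p.1 p.2, hcC, ?_⟩
  rw [supp_sigma_uncurry]
  simp_rw [hcS]
  exact univ_sigma_sigmaFiber S

end DirSum

/-- The direct sum code C₁ ⊕ ... ⊕ C_t is minimum stopping if and only if each C_i is
minimum stopping. -/
theorem stmt_17 {t : ℕ} {m : Fin t → ℕ}
    (C : ∀ i, Submodule (ZMod 2) (Fin (m i) → ZMod 2)) :
    MinStopping (dirSum C) ↔ ∀ i, MinStopping (C i) :=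
  ⟨MinStopping.of_dirSum C, minStopping_dirSum C⟩
end

section
/- If C is a minimum stopping binary linear [n,k,d] code with d ≥ 2 and no zero-coordinates, then C is equivalent (up to coordinate permutation) to a direct sum of repetition codes R_{n₁} ⊕ ... ⊕ R_{n_t} with each n_i ≥ 2 and n₁+...+n_t = n. -/
open Finset

variable {ι : Type*}

/-- The [m,1,m] binary repetition code. -/
def repCode (m : ℕ) : Submodule (ZMod 2) (Fin m → ZMod 2) where
  carrier := {x | ∀ j j', x j = x j'}
  add_mem' := fun ha hb j j' => by simp only [Pi.add_apply]; rw [ha j j', hb j j']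
  zero_mem' := fun j j' => rfl
  smul_mem' := fun c _ hx j j' => by simp only [Pi.smul_apply]; rw [hx j j']

/-! The supports of the codewords of a minimum stopping code are closed under unions, since a
set covered by supports of codewords is a stopping set of `H*`; being closed under complements
as well (the all-ones word is a codeword), they form a Boolean algebra of sets. Its atoms are the
classes of coordinates on which all codewords agree, and a word constant on each class has a
union of classes as support, hence is a codeword: so `C` is the direct sum of the repetition codes on the classes, which have size at least
`2` because `d ≥ 2`. -/

section Support

variable [Fintype ι]

lemma mem_supp {x : ι → ZMod 2} {j : ι} : j ∈ supp x ↔ x j ≠ 0 := by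
  simp [supp]

lemma supp_injective : Function.Injective (supp : (ι → ZMod 2) → Finset ι) := by
  intro x y h
  funext j
  have hj : x j ≠ 0 ↔ y j ≠ 0 := by rw [← mem_supp, ← mem_supp, h]
  revert hj
  generalize x j = a
  generalize y j = b
  revert a b
  decide

lemma supp_add_one [DecidableEq ι] (x : ι → ZMod 2) : supp (x + 1) = (supp x)ᶜ := by
  ext j
  simp only [mem_supp, mem_compl, Pi.add_apply, Pi.one_apply]
  generalize x j = a
  revert a
  decide

end Support

section MinStopping

variable [Fintype ι] {C : Submodule (ZMod 2) (ι → ZMod 2)}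

/-- A row of `H*` meeting such a set `S` in a single coordinate `a` would be orthogonal to a
codeword whose support contains `a` and lies in `S`, while meeting that support only in `a`. -/
lemma isStoppingSet_Hstar_of_cover {S : Finset ι}
    (hS : ∀ j ∈ S, ∃ c ∈ C, j ∈ supp c ∧ supp c ⊆ S) : IsStoppingSet (Hstar C) S := by
  rintro ⟨y, hy⟩ hcard
  obtain ⟨a, ha⟩ := card_eq_one.mp hcard
  have hrow : ∀ j, j ∈ S ∧ y j = 1 ↔ j = a := fun j => by
    have h := Finset.ext_iff.mp ha j
    rwa [mem_filter, mem_singleton] at h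
  obtain ⟨haS, hya⟩ := (hrow a).mpr rfl
  obtain ⟨c, hc, hac, hcS⟩ := hS a haS
  have hca : c a = 1 := by revert hac; rw [mem_supp]; generalize c a = b; revert b; decide
  have hprod : ∑ j, y j * c j = 1 := by
    rw [sum_eq_single a, hya, hca, one_mul]
    · intro j _ hja
      by_cases hcj : c j = 0
      · rw [hcj, mul_zero]
      · have hyj : y j ≠ 1 := fun h => hja ((hrow j).mp ⟨hcS (mem_supp.mpr hcj), h⟩)
        have hy0 : y j = 0 := by revert hyj; generalize y j = b; revert b; decide
        rw [hy0, zero_mul]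
    · simp
  exact one_ne_zero (hprod ▸ hy c hc)

lemma exists_supp_eq_of_cover (hms : MinStopping C) {S : Finset ι}
    (hS : ∀ j ∈ S, ∃ c ∈ C, j ∈ supp c ∧ supp c ⊆ S) : ∃ c ∈ C, supp c = S :=
  hms S (isStoppingSet_Hstar_of_cover hS)

lemma mem_of_cover (hms : MinStopping C) {x : ι → ZMod 2}
    (hx : ∀ j ∈ supp x, ∃ c ∈ C, j ∈ supp c ∧ supp c ⊆ supp x) : x ∈ C := by
  obtain ⟨c, hc, hcx⟩ := exists_supp_eq_of_cover hms hx
  exact supp_injective hcx ▸ hc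

lemma one_mem_of_minStopping (hms : MinStopping C) (hnz : ∀ j : ι, ∃ c ∈ C, c j ≠ 0) :
    (1 : ι → ZMod 2) ∈ C :=
  mem_of_cover hms fun j _ =>
    let ⟨c, hc, hcj⟩ := hnz j
    ⟨c, hc, mem_supp.mpr hcj, fun j' _ => by simp [mem_supp]⟩

/-- The class of `j` is the complement of the union of the supports of the codewords
`c + c j • 1`. -/
lemma exists_supp_eq_coordClass (hms : MinStopping C) (hnz : ∀ j : ι, ∃ c ∈ C, c j ≠ 0)
    (j : ι) : ∃ u ∈ C, ∀ j', j' ∈ supp u ↔ ∀ c ∈ C, c j' = c j := by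
  classical
  have hone := one_mem_of_minStopping hms hnz
  have hshift : ∀ c : ι → ZMod 2, ∀ j', j' ∈ supp (c + c j • 1) ↔ c j' ≠ c j := by
    intro c j'
    simp only [mem_supp, Pi.add_apply, Pi.smul_apply, Pi.one_apply, smul_eq_mul, mul_one]
    generalize c j' = a
    generalize c j = b
    revert a b
    decide
  obtain ⟨w, hw, hws⟩ := exists_supp_eq_of_cover hms
    (S := univ.filter fun j' => ∃ c ∈ C, c j' ≠ c j) <| by
      intro j' hj'
      obtain ⟨c, hc, hcj⟩ := (mem_filter.mp hj').2
      refine ⟨c + c j • 1, C.add_mem hc (C.smul_mem _ hone), (hshift c j').mpr hcj, ?_⟩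
      intro j'' hj''
      exact mem_filter.mpr ⟨mem_univ _, c, hc, (hshift c j'').mp hj''⟩
  refine ⟨w + 1, C.add_mem hw hone, fun j' => ?_⟩
  rw [supp_add_one, hws]
  simp

theorem mem_iff_forall_coordEquiv (hms : MinStopping C) (hnz : ∀ j : ι, ∃ c ∈ C, c j ≠ 0)
    {x : ι → ZMod 2} : x ∈ C ↔ ∀ j j', (∀ c ∈ C, c j = c j') → x j = x j' := by
  refine ⟨fun hx j j' h => h x hx, fun hx => mem_of_cover hms fun j hj => ?_⟩
  obtain ⟨u, hu, hus⟩ := exists_supp_eq_coordClass hms hnz j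
  refine ⟨u, hu, (hus j).mpr fun _ _ => rfl, fun j' hj' => ?_⟩
  rw [mem_supp] at hj ⊢
  rwa [hx j' j ((hus j').mp hj')]

end MinStopping

def coordSetoid (C : Submodule (ZMod 2) (ι → ZMod 2)) : Setoid ι where
  r j j' := ∀ c ∈ C, c j = c j'
  iseqv := ⟨fun _ _ _ => rfl, fun h c hc => (h c hc).symm,
    fun h₁ h₂ c hc => (h₁ c hc).trans (h₂ c hc)⟩

noncomputable def sigmaFinFiberEquiv {α : Type*} [Fintype α] {t : ℕ} (f : α → Fin t) :
    α ≃ Σ i, Fin (Fintype.card {a // f a = i}) :=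
  (Equiv.sigmaFiberEquiv f).symm.trans (Equiv.sigmaCongrRight fun _ => Fintype.equivFin _)

lemma sigmaFinFiberEquiv_fst {α : Type*} [Fintype α] {t : ℕ} (f : α → Fin t) (a : α) :
    (sigmaFinFiberEquiv f a).1 = f a :=
  rfl

lemma comp_symm_mem_dirSum_repCode_iff {α : Type*} {t : ℕ} {m : Fin t → ℕ}
    (σ : α ≃ Σ i, Fin (m i)) (x : α → ZMod 2) :
    (fun p => x (σ.symm p)) ∈ dirSum (fun i => repCode (m i)) ↔
      ∀ a b, (σ a).1 = (σ b).1 → x a = x b := by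
  refine ⟨fun h a b hab => ?_, fun h i j j' => h _ _ (by simp)⟩
  rcases hσa : σ a with ⟨i, ja⟩
  rcases hσb : σ b with ⟨i', jb⟩
  obtain rfl : i = i' := by simpa [hσa, hσb] using hab
  simpa [← hσa, ← hσb] using h i ja jb

/-- A minimum stopping binary linear [n,k,d] code with d ≥ 2 and no zero-coordinates is
equivalent, up to a coordinate permutation, to a direct sum of repetition codes
R_{n₁} ⊕ ... ⊕ R_{n_t} with all n_i ≥ 2 and n₁ + ... + n_t = n. -/
theorem stmt_18 {n k : ℕ} (C : Submodule (ZMod 2) (Fin n → ZMod 2))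
    (hk : Module.finrank (ZMod 2) C = k) (hk1 : 1 ≤ k)
    (hd : ∀ c ∈ C, c ≠ 0 → 2 ≤ wt c)
    (hnz : ∀ j : Fin n, ∃ c ∈ C, c j ≠ 0)
    (hms : MinStopping C) :
    ∃ (t : ℕ) (m : Fin t → ℕ), 1 ≤ t ∧ (∀ i, 2 ≤ m i) ∧ (∑ i, m i) = n ∧
      ∃ σ : Fin n ≃ (Σ i, Fin (m i)),
        ∀ x : Fin n → ZMod 2,
          x ∈ C ↔ (fun p => x (σ.symm p)) ∈ dirSum (fun i => repCode (m i)) := by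
  classical
  have hn : 0 < n := by
    have := Submodule.finrank_le C
    rw [Module.finrank_fin_fun] at this
    omega
  let e := Fintype.equivFin (Quotient (coordSetoid C))
  let f : Fin n → Fin _ := fun j => e ⟦j⟧
  have hf : ∀ j j', f j = f j' ↔ ∀ c ∈ C, c j = c j' := fun _ _ =>
    e.injective.eq_iff.trans Quotient.eq
  let σ := sigmaFinFiberEquiv f
  refine ⟨_, _, ?_, fun i => ?_, ?_, σ, fun x => ?_⟩
  · have : Nonempty (Quotient (coordSetoid C)) := ⟨⟦⟨0, hn⟩⟧⟩
    exact Fintype.card_pos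
  · obtain ⟨j, rfl⟩ : ∃ j, f j = i := (e.surjective.comp Quotient.mk_surjective) i
    obtain ⟨u, hu, hus⟩ := exists_supp_eq_coordClass hms hnz j
    have hclass : supp u = univ.filter fun j' => f j' = f j := by
      ext j'
      simp [hus, hf]
    have hu0 : u ≠ 0 := fun h => by simpa [h, mem_supp] using (hus j).mpr fun _ _ => rfl
    rw [Fintype.card_subtype, ← hclass]
    exact hd u hu hu0
  · simpa using (Fintype.card_congr σ).symm
  · rw [mem_iff_forall_coordEquiv hms hnz, comp_symm_mem_dirSum_repCode_iff]
    simp only [σ, sigmaFinFiberEquiv_fst, hf]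
end
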